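/- arXiv:2106.03942 — 2 statements merged into one kernel-verified Lean document; each statement's English description precedes it below -/
import Mathlib

section
/- For every integer n ≥ 0 and every complex number q with 0 < |q| < 1, the series ∑_{k=0}^∞ (q^{(n+k)²} − q^{(n+k+1)²}) · q^{−nk} · ∏_{l=1}^{2n} (1 − q^{k+l}) converges absolutely and its sum equals q^{n²} · ∏_{l=1}^{n} (1 − q^l). -/
/-!
After cancelling `q^{n²}`, the `k`-th summand is
`T_n(k) = q^{k(k+n)} (1 - q^{2n+2k+1}) (q^{k+1};q)_{2n}` (`surgeryTerm q n k`). For `n = 0` this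
is `q^{k²} - q^{(k+1)²}`, which telescopes to `1`. In general
`T_{n+1}(k) = (1 - q^{n+1}) T_n(k) + G_n(k) - G_n(k+1)` for an explicit `G_n`
(`surgeryCorrection q n`) with `G_n(0) = 0` and geometrically decaying terms, so `∑ₖ T_{n+1}(k) = (1 - q^{n+1}) ∑ₖ T_n(k)`, and induction
gives `(q;q)_n`.
-/

open Finset

theorem Summable.hasSum_sub_succ {G : Type*} [AddCommGroup G] [TopologicalSpace G]
    [IsTopologicalAddGroup G] {g : ℕ → G} (hg : Summable g) :
    HasSum (fun k => g k - g (k + 1)) (g 0) := by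
  simpa using hg.hasSum.sub ((hasSum_nat_add_iff' 1).2 hg.hasSum)

section Algebra

variable {R : Type*} [CommRing R]

theorem one_sub_pow_mul_prod_range_one_sub_pow (q : R) (k m : ℕ) :
    (1 - q ^ (k + 1)) * ∏ l ∈ range m, (1 - q ^ (k + 1 + l + 1)) =
      ∏ l ∈ range (m + 1), (1 - q ^ (k + l + 1)) := by
  rw [prod_range_succ', mul_comm]
  simp only [add_assoc, add_comm 1, zero_add]

def surgeryTerm (q : R) (n k : ℕ) : R :=
  q ^ (k * (k + n)) * (1 - q ^ (2 * n + 2 * k + 1)) *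
    ∏ l ∈ range (2 * n), (1 - q ^ (k + l + 1))

def surgeryCorrection (q : R) (n k : ℕ) : R :=
  q ^ (k * (k + n)) * (q ^ (n + k + 1) * (1 - q ^ (2 * n + k + 1)) - (1 - q ^ (n + 1))) *
    ((1 - q ^ k) * ∏ l ∈ range (2 * n), (1 - q ^ (k + l + 1)))

@[simp]
theorem surgeryCorrection_zero (q : R) (n : ℕ) : surgeryCorrection q n 0 = 0 := by
  simp [surgeryCorrection]

theorem surgeryTerm_succ (q : R) (n k : ℕ) :
    surgeryTerm q (n + 1) k = (1 - q ^ (n + 1)) * surgeryTerm q n k +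
      (surgeryCorrection q n k - surgeryCorrection q n (k + 1)) := by
  unfold surgeryTerm surgeryCorrection
  rw [one_sub_pow_mul_prod_range_one_sub_pow, prod_range_succ, mul_add 2, mul_one,
    prod_range_succ, prod_range_succ]
  ring

end Algebra

section Analysis

variable {𝕜 : Type*} [NormedField 𝕜] {q : 𝕜}

theorem norm_one_sub_pow_le_two (hq : ‖q‖ ≤ 1) (j : ℕ) : ‖1 - q ^ j‖ ≤ 2 := by
  have := pow_le_one₀ (norm_nonneg q) hq (n := j)
  calc ‖1 - q ^ j‖ ≤ ‖(1 : 𝕜)‖ + ‖q ^ j‖ := norm_sub_le _ _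
    _ ≤ 2 := by rw [norm_one, norm_pow]; linarith

theorem norm_prod_one_sub_pow_le {ι : Type*} (hq : ‖q‖ ≤ 1) (s : Finset ι) (a : ι → ℕ) :
    ‖∏ i ∈ s, (1 - q ^ a i)‖ ≤ 2 ^ #s := by
  rw [norm_prod]
  exact (prod_le_prod (fun _ _ => norm_nonneg _) fun i _ => norm_one_sub_pow_le_two hq (a i)).trans
    (by simp)

theorem norm_one_sub_pow_mul_prod_range_le (hq : ‖q‖ ≤ 1) (j m : ℕ) (a : ℕ → ℕ) :
    ‖(1 - q ^ j) * ∏ l ∈ range m, (1 - q ^ a l)‖ ≤ 2 * 2 ^ m := by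
  rw [norm_mul]
  exact mul_le_mul (norm_one_sub_pow_le_two hq j) ((norm_prod_one_sub_pow_le hq _ a).trans (by simp))
    (norm_nonneg _) zero_le_two

theorem summable_norm_pow_mul (hq : ‖q‖ < 1) {e : ℕ → ℕ} (he : ∀ k, k ≤ e k) {b : ℕ → 𝕜}
    {C : ℝ} (hb : ∀ k, ‖b k‖ ≤ C) : Summable fun k => ‖q ^ e k * b k‖ := by
  refine .of_nonneg_of_le (fun _ => norm_nonneg _) (fun k => ?_)
    ((summable_geometric_of_lt_one (norm_nonneg q) hq).mul_right C)
  rw [norm_mul, norm_pow]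
  exact mul_le_mul (pow_le_pow_of_le_one (norm_nonneg q) hq.le (he k)) (hb k) (norm_nonneg _)
    (pow_nonneg (norm_nonneg q) k)

theorem le_mul_add_self (k n : ℕ) : k ≤ k * (k + n) :=
  (Nat.le_mul_self k).trans (Nat.mul_le_mul_left k (Nat.le_add_right k n))

theorem summable_norm_surgeryTerm (hq : ‖q‖ < 1) (n : ℕ) :
    Summable fun k => ‖surgeryTerm q n k‖ := by
  simp only [surgeryTerm, mul_assoc]
  refine summable_norm_pow_mul hq (fun k => le_mul_add_self k n) (C := 2 * 2 ^ (2 * n)) fun k => ?_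
  exact norm_one_sub_pow_mul_prod_range_le hq.le _ _ _

theorem summable_norm_surgeryCorrection (hq : ‖q‖ < 1) (n : ℕ) :
    Summable fun k => ‖surgeryCorrection q n k‖ := by
  simp only [surgeryCorrection, mul_assoc]
  refine summable_norm_pow_mul hq (fun k => le_mul_add_self k n)
    (C := (2 + 2) * (2 * 2 ^ (2 * n))) fun k => ?_
  have hbracket : ‖q ^ (n + k + 1) * (1 - q ^ (2 * n + k + 1)) - (1 - q ^ (n + 1))‖ ≤ 2 + 2 := by
    refine (norm_sub_le _ _).trans (add_le_add ?_ (norm_one_sub_pow_le_two hq.le _))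
    rw [norm_mul, norm_pow]
    exact (mul_le_of_le_one_left (norm_nonneg _) (pow_le_one₀ (norm_nonneg q) hq.le)).trans
      (norm_one_sub_pow_le_two hq.le _)
  rw [norm_mul]
  exact mul_le_mul hbracket (norm_one_sub_pow_mul_prod_range_le hq.le _ _ _) (norm_nonneg _)
    (by norm_num)

theorem hasSum_surgeryTerm [CompleteSpace 𝕜] (hq : ‖q‖ < 1) (n : ℕ) :
    HasSum (surgeryTerm q n) (∏ l ∈ range n, (1 - q ^ (l + 1))) := by
  induction n with
  | zero =>
    have hsq : Summable fun k : ℕ => q ^ (k * k) :=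
      (summable_norm_pow_mul hq (fun k => le_mul_add_self k 0) (b := 1) (C := 1)
        (by simp)).of_norm.congr fun k => by simp
    have hterm : surgeryTerm q 0 = fun k => q ^ (k * k) - q ^ ((k + 1) * (k + 1)) := by
      funext k
      simp only [surgeryTerm, mul_zero, range_zero, prod_empty]
      ring
    simpa [hterm] using hsq.hasSum_sub_succ
  | succ n ih =>
    have htel := (summable_norm_surgeryCorrection hq n).of_norm.hasSum_sub_succ
    rw [surgeryCorrection_zero] at htel
    have hsum := (ih.mul_left (1 - q ^ (n + 1))).add htel
    rw [add_zero, ← funext (surgeryTerm_succ q n)] at hsum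
    rwa [prod_range_succ, mul_comm]

end Analysis

theorem surgery_summand_eq {K : Type*} [Field K] {q : K} (hq : q ≠ 0) (n k : ℕ) :
    (q ^ ((n + k) ^ 2) - q ^ ((n + k + 1) ^ 2)) * q ^ (-(n * k : ℤ)) *
        ∏ l ∈ range (2 * n), (1 - q ^ (k + l + 1)) = q ^ (n ^ 2) * surgeryTerm q n k := by
  have hcancel : q ^ (n * k) * q ^ (-(n * k : ℤ)) = 1 := by
    rw [← zpow_natCast, ← zpow_add₀ hq]
    simp
  calc _ = q ^ (n ^ 2) * surgeryTerm q n k * (q ^ (n * k) * q ^ (-(n * k : ℤ))) := by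
        rw [surgeryTerm, show (n + k) ^ 2 = n ^ 2 + k * (k + n) + n * k by ring,
          show (n + k + 1) ^ 2 = n ^ 2 + k * (k + n) + (2 * n + 2 * k + 1) + n * k by ring]
        ring
    _ = _ := by rw [hcancel, mul_one]

/-- Normalized `−1`-surgery identity (multiplied through by `(q;q)_{2n}`):
`∑_{k≥0} (q^{(n+k)²} − q^{(n+k+1)²}) q^{−nk} ∏_{l=1}^{2n}(1 − q^{k+l})
  = q^{n²} ∏_{l=1}^{n}(1 − q^l)`, converging absolutely for `0 < |q| < 1`. -/
theorem minus_one_surgery_identity_normalized (n : ℕ) (q : ℂ)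
    (hq0 : 0 < ‖q‖) (hq1 : ‖q‖ < 1) :
    Summable (fun k : ℕ =>
      ‖(q ^ ((n + k) ^ 2) - q ^ ((n + k + 1) ^ 2)) * q ^ (-(n * k : ℤ)) *
        ∏ l ∈ Finset.range (2 * n), (1 - q ^ (k + l + 1))‖) ∧
    ∑' k : ℕ, (q ^ ((n + k) ^ 2) - q ^ ((n + k + 1) ^ 2)) * q ^ (-(n * k : ℤ)) *
        ∏ l ∈ Finset.range (2 * n), (1 - q ^ (k + l + 1))
      = q ^ (n ^ 2) * ∏ l ∈ Finset.range n, (1 - q ^ (l + 1)) := by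
  simp only [surgery_summand_eq (norm_pos_iff.mp hq0)]
  refine ⟨?_, ((hasSum_surgeryTerm hq1 n).mul_left _).tsum_eq⟩
  simpa only [norm_mul, norm_pow] using (summable_norm_surgeryTerm hq1 n).mul_left (‖q‖ ^ (n ^ 2))
end

section
/- For every integer n ≥ 0 and every complex number q with |q| > 1, the series ∑_{k=0}^∞ (q^{−(n+k)²} − q^{−(n+k+1)²}) · q^{−nk} · C_q(2n+k, 2n) converges absolutely and its sum equals (−1)^n q^{n(n+1)/2} / ∏_{j=1}^{n} (1 − q^{n+j}). -/
/-- The q-Pochhammer symbol `(a;q)_m = ∏_{l=0}^{m-1} (1 - a q^l)`. -/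
noncomputable def qPoch (a q : ℂ) (m : ℕ) : ℂ := ∏ l ∈ Finset.range m, (1 - a * q ^ l)

/-- The Gaussian binomial coefficient `C_q(m,r) = (q;q)_m / ((q;q)_r (q;q)_{m-r})`. -/
noncomputable def qBinom (q : ℂ) (m r : ℕ) : ℂ :=
  qPoch q q m / (qPoch q q r * qPoch q q (m - r))

/-!
Put `p = q⁻¹`. The balanced `q`-binomial `q^{-nk} C_q(2n+k,2n)` is invariant under `q ↦ q⁻¹`, so
the series becomes the `−1`-surgery series
`S_n = ∑_k (p^{(n+k)²} − p^{(n+k+1)²}) p^{-nk} C_p(2n+k,2n)` with `|p| < 1`, and the right-hand side becomes `p^{n²} / (p^{n+1};p)_n`.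

For `|p| < 1` the `C_p(2n+k,2n) = (p^{k+1};p)_{2n} / (p;p)_{2n}` are bounded in `k`, so the series
converges absolutely. For `n = 0` it telescopes to `1`. Creative telescoping gives a termwise
identity `p^{2n+1}(1 − p^{n+1}) t_n(k) − (1 − p^{2n+1})(1 − p^{2n+2}) t_{n+1}(k) = w(k) − w(k+1)`
with `w(0) = 0` and `w(k) → 0`; summing over `k` yields a first-order recurrence for `S_n` which
`p^{n²} / (p^{n+1};p)_n` also satisfies.
-/

open Finset Filter Topology

section QBinomial

variable {q : ℂ}

lemma qPoch_succ (a q : ℂ) (m : ℕ) : qPoch a q (m + 1) = qPoch a q m * (1 - a * q ^ m) :=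
  prod_range_succ _ m

lemma qPoch_succ' (a q : ℂ) (m : ℕ) : qPoch a q (m + 1) = (1 - a) * qPoch (a * q) q m := by
  simp only [qPoch, prod_range_succ', pow_succ, pow_zero, mul_one, mul_assoc, mul_comm]

lemma qPoch_add (a q : ℂ) (m l : ℕ) :
    qPoch a q (m + l) = qPoch a q m * qPoch (a * q ^ m) q l := by
  simp only [qPoch, prod_range_add, pow_add, mul_assoc]

lemma one_sub_mul_qPoch_mul (a q : ℂ) (m : ℕ) :
    (1 - a) * qPoch (a * q) q (m + 1)
      = qPoch a q m * ((1 - a * q ^ m) * (1 - a * q ^ (m + 1))) := by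
  rw [← qPoch_succ', qPoch_succ, qPoch_succ, mul_assoc]

lemma qPoch_self_ne_zero (hq : ∀ m : ℕ, q ^ (m + 1) ≠ 1) (m : ℕ) : qPoch q q m ≠ 0 := by
  refine prod_ne_zero_iff.mpr fun l _ => ?_
  rw [← pow_succ', sub_ne_zero]
  exact (hq l).symm

lemma qBinom_add_left (hq : ∀ m : ℕ, q ^ (m + 1) ≠ 1) (r k : ℕ) :
    qBinom q (r + k) r = qPoch (q ^ (k + 1)) q r / qPoch q q r := by
  have hk := qPoch_self_ne_zero hq k
  rw [qBinom, Nat.add_sub_cancel_left, add_comm, qPoch_add, ← pow_succ']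
  field_simp

lemma qBinom_add_succ_mul (hq : ∀ m : ℕ, q ^ (m + 1) ≠ 1) (r k : ℕ) :
    qBinom q (r + (k + 1)) r * (1 - q ^ (k + 1)) = qBinom q (r + k) r * (1 - q ^ (r + k + 1)) := by
  have h := (qPoch_succ' (q ^ (k + 1)) q r).symm.trans (qPoch_succ _ q r)
  rw [qBinom_add_left hq, qBinom_add_left hq, div_mul_eq_mul_div, div_mul_eq_mul_div]
  congr 1
  rw [← pow_succ, ← pow_add] at h
  linear_combination h

lemma qBinom_succ_add_mul (hq : ∀ m : ℕ, q ^ (m + 1) ≠ 1) (r k : ℕ) :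
    qBinom q (r + 1 + k) (r + 1) * (1 - q ^ (r + 1))
      = qBinom q (r + k) r * (1 - q ^ (r + k + 1)) := by
  have hr : 1 - q ^ (r + 1) ≠ 0 := sub_ne_zero.mpr (hq r).symm
  rw [qBinom_add_left hq, qBinom_add_left hq, qPoch_succ, qPoch_succ, ← pow_succ', ← pow_add]
  field_simp
  ring

lemma inv_pow_succ_ne_one (hq : ∀ m : ℕ, q ^ (m + 1) ≠ 1) (m : ℕ) : q⁻¹ ^ (m + 1) ≠ 1 := by
  rw [inv_pow, inv_ne_one]
  exact hq m

lemma qBinom_inv_add_left (hq0 : q ≠ 0) (hq : ∀ m : ℕ, q ^ (m + 1) ≠ 1) (r k : ℕ) :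
    qBinom q⁻¹ (r + k) r = qBinom q (r + k) r / q ^ (r * k) := by
  rw [qBinom_add_left hq, qBinom_add_left (inv_pow_succ_ne_one hq), qPoch, qPoch, qPoch, qPoch,
    ← prod_div_distrib, ← prod_div_distrib, mul_comm, pow_mul, pow_eq_prod_const (q ^ k) r,
    ← prod_div_distrib]
  refine prod_congr rfl fun i _ => ?_
  have h₁ : q ^ (i + 1) - 1 ≠ 0 := sub_ne_zero.mpr (hq i)
  have h₂ : 1 - q ^ (i + 1) ≠ 0 := sub_ne_zero.mpr (hq i).symm
  simp only [← pow_succ', ← pow_add]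
  simp only [inv_pow]
  rw [show k + 1 + i = k + (i + 1) by ring, pow_add]
  field_simp
  ring

end QBinomial

section Bounds

variable {a q : ℂ}

lemma norm_one_sub_le_two {z : ℂ} (hz : ‖z‖ ≤ 1) : ‖1 - z‖ ≤ 2 := by
  linarith [norm_sub_le (1 : ℂ) z, norm_one (α := ℂ)]

lemma norm_pow_le_of_le (hq : ‖q‖ ≤ 1) {k e : ℕ} (h : k ≤ e) : ‖q ^ e‖ ≤ ‖q‖ ^ k := by
  rw [norm_pow]
  exact pow_le_pow_of_le_one (norm_nonneg _) hq h

lemma norm_qPoch_le (ha : ‖a‖ ≤ 1) (hq : ‖q‖ ≤ 1) (m : ℕ) : ‖qPoch a q m‖ ≤ 2 ^ m := by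
  rw [qPoch, norm_prod]
  refine (prod_le_prod (fun _ _ => norm_nonneg _) fun l _ => norm_one_sub_le_two ?_).trans_eq
    (by simp)
  rw [norm_mul, norm_pow]
  exact mul_le_one₀ ha (by positivity) (pow_le_one₀ (norm_nonneg _) hq)

lemma one_sub_norm_pow_le_norm_qPoch (ha : ‖a‖ ≤ 1) (hq : ‖q‖ ≤ 1) (m : ℕ) :
    (1 - ‖a‖) ^ m ≤ ‖qPoch a q m‖ := by
  rw [qPoch, norm_prod]
  refine (Eq.trans_le (by simp) (prod_le_prod (fun _ _ => sub_nonneg.mpr ha) fun l _ => ?_))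
  calc 1 - ‖a‖ ≤ ‖(1 : ℂ)‖ - ‖a * q ^ l‖ := by
        rw [norm_one, norm_mul, norm_pow]
        gcongr
        exact mul_le_of_le_one_right (norm_nonneg _) (pow_le_one₀ (norm_nonneg _) hq)
    _ ≤ ‖1 - a * q ^ l‖ := norm_sub_norm_le _ _

lemma qPoch_ne_zero_of_norm_lt_one (ha : ‖a‖ < 1) (hq : ‖q‖ ≤ 1) (m : ℕ) : qPoch a q m ≠ 0 :=
  norm_pos_iff.mp <|
    (pow_pos (sub_pos.mpr ha) m).trans_le (one_sub_norm_pow_le_norm_qPoch ha.le hq m)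

lemma norm_pow_succ_lt_one (hq : ‖q‖ < 1) (m : ℕ) : ‖q ^ (m + 1)‖ < 1 := by
  rw [norm_pow]
  exact pow_lt_one₀ (norm_nonneg _) hq m.succ_ne_zero

lemma pow_succ_ne_one_of_norm_lt_one (hq : ‖q‖ < 1) (m : ℕ) : q ^ (m + 1) ≠ 1 := fun h => by
  simpa [h] using norm_pow_succ_lt_one hq m

lemma norm_qBinom_add_left_le (hq : ‖q‖ < 1) (r k : ℕ) :
    ‖qBinom q (r + k) r‖ ≤ (2 / (1 - ‖q‖)) ^ r := by
  rw [qBinom_add_left (pow_succ_ne_one_of_norm_lt_one hq), norm_div, div_pow]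
  exact div_le_div₀ (by positivity) (norm_qPoch_le (norm_pow_succ_lt_one hq k).le hq.le r)
    (pow_pos (sub_pos.mpr hq) r) (one_sub_norm_pow_le_norm_qPoch hq.le hq.le r)

end Bounds

lemma hasSum_of_eq_sub_succ {E : Type*} [NormedAddCommGroup E] {f u : ℕ → E} (hf : Summable f)
    (h : ∀ k, f k = u k - u (k + 1)) (hu : Tendsto u atTop (𝓝 0)) : HasSum f (u 0) := by
  rw [hf.hasSum_iff_tendsto_nat]
  simp_rw [h, sum_range_sub']
  simpa using tendsto_const_nhds.sub hu

section MinusOneSurgery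

variable {p : ℂ}

/-- The summand `(p^{(n+k)²} − p^{(n+k+1)²}) p^{−nk} C_p(2n+k,2n)` of the `−1`-surgery series. -/
noncomputable def minusOneTerm (p : ℂ) (n k : ℕ) : ℂ :=
  p ^ (n ^ 2 + n * k + k ^ 2) * (1 - p ^ (2 * n + 2 * k + 1)) * qBinom p (2 * n + k) (2 * n)

/-- Obtained by Zeilberger's creative telescoping applied to `minusOneTerm`. -/
noncomputable def minusOneCertificate (p : ℂ) (n k : ℕ) : ℂ :=
  p ^ (n ^ 2 + n * k + k ^ 2 + 2 * n + 1) * (1 - p ^ k) *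
    (1 - p ^ (n + 1) - p ^ (n + k + 1) * (1 - p ^ (2 * n + k + 1))) * qBinom p (2 * n + k) (2 * n)

lemma minusOneTerm_zero_left (hp : ∀ m : ℕ, p ^ (m + 1) ≠ 1) (k : ℕ) :
    minusOneTerm p 0 k = p ^ k ^ 2 - p ^ (k + 1) ^ 2 := by
  have h : qBinom p (2 * 0 + k) (2 * 0) = 1 := by
    rw [qBinom_add_left hp]
    simp [qPoch]
  rw [minusOneTerm, h]
  ring

lemma minusOneCertificate_zero (p : ℂ) (n : ℕ) : minusOneCertificate p n 0 = 0 := by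
  simp [minusOneCertificate]

lemma minusOneTerm_recurrence (hp : ∀ m : ℕ, p ^ (m + 1) ≠ 1) (n k : ℕ) :
    p ^ (2 * n + 1) * (1 - p ^ (n + 1)) * minusOneTerm p n k
        - (1 - p ^ (2 * n + 1)) * (1 - p ^ (2 * n + 2)) * minusOneTerm p (n + 1) k
      = minusOneCertificate p n k - minusOneCertificate p n (k + 1) := by
  have hk := qBinom_add_succ_mul hp (2 * n) k
  have hn : qBinom p (2 * (n + 1) + k) (2 * (n + 1))
        * ((1 - p ^ (2 * n + 1)) * (1 - p ^ (2 * n + 2)))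
      = qBinom p (2 * n + k) (2 * n) * ((1 - p ^ (2 * n + k + 1)) * (1 - p ^ (2 * n + k + 2))) := by
    have h1 := qBinom_succ_add_mul hp (2 * n + 1) k
    have h2 := qBinom_succ_add_mul hp (2 * n) k
    rw [show 2 * (n + 1) = 2 * n + 1 + 1 by ring]
    linear_combination (1 - p ^ (2 * n + 1)) * h1 + (1 - p ^ (2 * n + 1 + k + 1)) * h2
  rw [minusOneTerm, minusOneTerm, minusOneCertificate, minusOneCertificate]
  linear_combination
    p ^ (n ^ 2 + n * (k + 1) + (k + 1) ^ 2 + 2 * n + 1) *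
        (1 - p ^ (n + 1) - p ^ (n + (k + 1) + 1) * (1 - p ^ (2 * n + (k + 1) + 1))) * hk
      - p ^ ((n + 1) ^ 2 + (n + 1) * k + k ^ 2) * (1 - p ^ (2 * (n + 1) + 2 * k + 1)) * hn

lemma norm_minusOneTerm_le (hp : ‖p‖ < 1) (n k : ℕ) :
    ‖minusOneTerm p n k‖ ≤ ‖p‖ ^ k * 2 * (2 / (1 - ‖p‖)) ^ (2 * n) := by
  have hpow : ∀ m : ℕ, ‖p ^ m‖ ≤ 1 := fun m => by simpa using pow_le_one₀ (norm_nonneg p) hp.le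
  rw [minusOneTerm, norm_mul, norm_mul]
  gcongr
  · exact norm_pow_le_of_le hp.le (by nlinarith)
  · exact norm_one_sub_le_two (hpow _)
  · exact norm_qBinom_add_left_le hp _ _

lemma norm_minusOneCertificate_le (hp : ‖p‖ < 1) (n k : ℕ) :
    ‖minusOneCertificate p n k‖ ≤ ‖p‖ ^ k * 2 * 4 * (2 / (1 - ‖p‖)) ^ (2 * n) := by
  have hpow : ∀ m : ℕ, ‖p ^ m‖ ≤ 1 := fun m => by simpa using pow_le_one₀ (norm_nonneg p) hp.le
  rw [minusOneCertificate, norm_mul, norm_mul, norm_mul]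
  gcongr
  · exact norm_pow_le_of_le hp.le (by nlinarith)
  · exact norm_one_sub_le_two (hpow k)
  · have h := norm_sub_le (1 - p ^ (n + 1)) (p ^ (n + k + 1) * (1 - p ^ (2 * n + k + 1)))
    rw [norm_mul] at h
    nlinarith [norm_one_sub_le_two (hpow (n + 1)), norm_one_sub_le_two (hpow (2 * n + k + 1)),
      hpow (n + k + 1), norm_nonneg (1 - p ^ (2 * n + k + 1))]
  · exact norm_qBinom_add_left_le hp _ _

lemma summable_norm_minusOneTerm (hp : ‖p‖ < 1) (n : ℕ) :
    Summable fun k => ‖minusOneTerm p n k‖ :=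
  .of_nonneg_of_le (fun _ => norm_nonneg _) (norm_minusOneTerm_le hp n)
    (((summable_geometric_of_lt_one (norm_nonneg _) hp).mul_right _).mul_right _)

lemma tendsto_minusOneCertificate (hp : ‖p‖ < 1) (n : ℕ) :
    Tendsto (minusOneCertificate p n) atTop (𝓝 0) :=
  squeeze_zero_norm (norm_minusOneCertificate_le hp n) <| by
    simpa using (((tendsto_pow_atTop_nhds_zero_of_lt_one (norm_nonneg _) hp).mul_const _).mul_const
      _).mul_const _

lemma pow_sq_div_qPoch_recurrence (hp : ‖p‖ < 1) (n : ℕ) :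
    p ^ (n + 1) ^ 2 / qPoch (p ^ (n + 1 + 1)) p (n + 1)
        * ((1 - p ^ (2 * n + 1)) * (1 - p ^ (2 * n + 2)))
      = p ^ (2 * n + 1) * (1 - p ^ (n + 1)) * (p ^ n ^ 2 / qPoch (p ^ (n + 1)) p n) := by
  have hQ := one_sub_mul_qPoch_mul (p ^ (n + 1)) p n
  rw [← pow_succ, ← pow_add, ← pow_add] at hQ
  have hQn := qPoch_ne_zero_of_norm_lt_one (norm_pow_succ_lt_one hp n) hp.le n
  have hQn' := qPoch_ne_zero_of_norm_lt_one (norm_pow_succ_lt_one hp (n + 1)) hp.le (n + 1)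
  field_simp
  linear_combination -(p ^ (2 * n + 1) * p ^ n ^ 2) * hQ

theorem minus_one_surgery_identity (hp : ‖p‖ < 1) (n : ℕ) :
    HasSum (minusOneTerm p n) (p ^ n ^ 2 / qPoch (p ^ (n + 1)) p n) := by
  have hp1 := pow_succ_ne_one_of_norm_lt_one hp
  induction n with
  | zero =>
    have hsq : Tendsto (fun k : ℕ => p ^ k ^ 2) atTop (𝓝 0) :=
      (tendsto_pow_atTop_nhds_zero_of_norm_lt_one hp).comp (tendsto_pow_atTop two_ne_zero)
    simpa [qPoch] using
      hasSum_of_eq_sub_succ (summable_norm_minusOneTerm hp 0).of_norm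
        (minusOneTerm_zero_left hp1) hsq
  | succ n ih =>
    have hsum := (summable_norm_minusOneTerm hp n).of_norm
    have hS := (summable_norm_minusOneTerm hp (n + 1)).of_norm.hasSum
    have htel := hasSum_of_eq_sub_succ ((hsum.mul_left _).sub (hS.summable.mul_left _))
      (minusOneTerm_recurrence hp1 n) (tendsto_minusOneCertificate hp n)
    have hrec := ((ih.mul_left _).sub (hS.mul_left _)).unique htel
    rw [minusOneCertificate_zero] at hrec
    have hA : (1 - p ^ (2 * n + 1)) * (1 - p ^ (2 * n + 2)) ≠ 0 :=
      mul_ne_zero (sub_ne_zero.mpr (hp1 (2 * n)).symm) (sub_ne_zero.mpr (hp1 (2 * n + 1)).symm)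
    suffices hval : ∑' k, minusOneTerm p (n + 1) k
        = p ^ (n + 1) ^ 2 / qPoch (p ^ (n + 1 + 1)) p (n + 1) from hval ▸ hS
    exact mul_left_cancel₀ hA (by linear_combination -hrec - pow_sq_div_qPoch_recurrence hp n)

end MinusOneSurgery

section PlusOneSurgery

variable {q : ℂ}

lemma minusOneTerm_inv (hq0 : q ≠ 0) (hq : ∀ m : ℕ, q ^ (m + 1) ≠ 1) (n k : ℕ) :
    minusOneTerm q⁻¹ n k = (q ^ (-((n + k : ℤ) ^ 2)) - q ^ (-((n + k + 1 : ℤ) ^ 2))) *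
      q ^ (-(n * k : ℤ)) * qBinom q (2 * n + k) (2 * n) := by
  have hzpow : ∀ m : ℕ, q ^ (-(m : ℤ)) = q⁻¹ ^ m := fun m => by rw [zpow_neg, zpow_natCast, inv_pow]
  have hbinom := qBinom_inv_add_left (inv_ne_zero hq0) (inv_pow_succ_ne_one hq) (2 * n) k
  rw [inv_inv] at hbinom
  rw [show -((n + k : ℤ) ^ 2) = -(((n + k) ^ 2 : ℕ) : ℤ) by push_cast; ring,
    show -((n + k + 1 : ℤ) ^ 2) = -(((n + k + 1) ^ 2 : ℕ) : ℤ) by push_cast; ring,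
    show -((n : ℤ) * k) = -((n * k : ℕ) : ℤ) by push_cast; ring, hzpow, hzpow, hzpow, hbinom,
    minusOneTerm]
  field_simp
  ring

lemma prod_range_one_sub_pow_eq (hq0 : q ≠ 0) (n : ℕ) :
    ∏ j ∈ range n, (1 - q ^ (n + j + 1))
      = (-1) ^ n * q ^ (n ^ 2 + n * (n + 1) / 2) * qPoch (q⁻¹ ^ (n + 1)) q⁻¹ n := by
  have hsum : ∑ j ∈ range n, (n + j + 1) = n ^ 2 + n * (n + 1) / 2 := by
    have h := sum_range_id_mul_two (n + 1)
    rw [sum_range_succ', add_zero, Nat.add_sub_cancel, mul_comm (n + 1)] at h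
    rw [Nat.div_eq_of_eq_mul_left two_pos h.symm]
    simp only [add_assoc, sum_add_distrib, sum_const, card_range, smul_eq_mul, sq]
  rw [← hsum, ← prod_pow_eq_pow_sum, qPoch, pow_eq_prod_const (-1 : ℂ) n, ← prod_mul_distrib,
    ← prod_mul_distrib]
  refine prod_congr rfl fun j _ => ?_
  simp only [← pow_add]
  simp only [inv_pow]
  rw [show n + j + 1 = n + 1 + j by ring]
  field_simp
  ring

lemma inv_pow_sq_div_qPoch_inv (hq0 : q ≠ 0) (n : ℕ) :
    q⁻¹ ^ n ^ 2 / qPoch (q⁻¹ ^ (n + 1)) q⁻¹ n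
      = (-1) ^ n * q ^ (n * (n + 1) / 2) / ∏ j ∈ range n, (1 - q ^ (n + j + 1)) := by
  rw [prod_range_one_sub_pow_eq hq0, ← div_div]
  congr 1
  rw [pow_add, inv_pow]
  field_simp

end PlusOneSurgery

/-- Regularized `+1`-surgery evaluation: for `|q| > 1`,
`∑_{k≥0} (q^{−(n+k)²} − q^{−(n+k+1)²}) q^{−nk} C_q(2n+k,2n)
  = (−1)^n q^{n(n+1)/2} / ∏_{j=1}^n (1 − q^{n+j})`, converging absolutely. -/
theorem plus_one_surgery_identity (n : ℕ) (q : ℂ) (hq : 1 < ‖q‖) :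
    Summable (fun k : ℕ =>
      ‖(q ^ (-((n + k : ℤ) ^ 2)) - q ^ (-((n + k + 1 : ℤ) ^ 2))) * q ^ (-(n * k : ℤ)) *
        qBinom q (2 * n + k) (2 * n)‖) ∧
    ∑' k : ℕ, (q ^ (-((n + k : ℤ) ^ 2)) - q ^ (-((n + k + 1 : ℤ) ^ 2))) * q ^ (-(n * k : ℤ)) *
        qBinom q (2 * n + k) (2 * n)
      = (-1) ^ n * q ^ (n * (n + 1) / 2) / ∏ j ∈ Finset.range n, (1 - q ^ (n + j + 1)) := by
  have hp : ‖q⁻¹‖ < 1 := by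
    rw [norm_inv]
    exact inv_lt_one_of_one_lt₀ hq
  have hq0 : q ≠ 0 := norm_pos_iff.mp (one_pos.trans hq)
  have hq1 : ∀ m : ℕ, q ^ (m + 1) ≠ 1 := fun m => by
    simpa [inv_pow] using pow_succ_ne_one_of_norm_lt_one hp m
  simp_rw [← minusOneTerm_inv hq0 hq1, ← inv_pow_sq_div_qPoch_inv hq0]
  exact ⟨summable_norm_minusOneTerm hp n, (minus_one_surgery_identity hp n).tsum_eq⟩
end
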